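/- Let G be a countable group and H ≤ G a subgroup. If the left multiplication action of G on G/H is sofic, then there exists a normal subgroup N of G with N ≤ H such that G/N is a sofic group. -/

import Mathlib

open scoped Classical Pointwise

noncomputable def hDist {A : Type*} [Fintype A] (σ τ : Equiv.Perm A) : ℝ :=
  ((Finset.univ.filter fun a => σ a ≠ τ a).card : ℝ) / (Fintype.card A : ℝ)

/-- `φ : G → Sym(Fin n)` is an `(F, E, ε)`-orbit approximation of the action `α : G ↷ X`. -/
def IsOrbitApprox {G X : Type*} [Group G] {n : ℕ} (α : G →* Equiv.Perm X)
    (F : Finset G) (E : Finset X) (ε : ℝ) (φ : G → Equiv.Perm (Fin n)) : Prop :=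
  ∃ (m : ℕ) (S : Finset (Fin n)) (π : Fin n → X → Fin m),
    ((S.card : ℝ) > (1 - ε) * (n : ℝ)) ∧
    (∀ s ∈ S, Set.InjOn (π s) (E : Set X)) ∧
    (∀ s ∈ S, ∀ g ∈ F, ∀ x ∈ E, φ g s ∈ S → α g⁻¹ x ∈ E →
      π (φ g s) x = π s (α g⁻¹ x))

/-- Soficity of an action `α : G ↷ X` given as a homomorphism `G →* Sym(X)`. -/
def SoficAction {G X : Type*} [Group G] (α : G →* Equiv.Perm X) : Prop :=
  ∀ (F : Finset G) (E : Finset X) (ε : ℝ), 0 < ε →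
    ∃ (n : ℕ) (φ : G → Equiv.Perm (Fin n)),
      φ 1 = 1 ∧
      (∀ g ∈ F, ∀ h ∈ F, hDist (φ (g * h)) (φ g * φ h) < ε) ∧
      IsOrbitApprox α F E ε φ

/-- Soficity of a group. -/
def SoficGroup (G : Type*) [Group G] : Prop :=
  ∀ (F : Finset G) (ε : ℝ), 0 < ε →
    ∃ (n : ℕ) (φ : G → Equiv.Perm (Fin n)),
      φ 1 = 1 ∧
      (∀ g ∈ F, ∀ h ∈ F, hDist (φ (g * h)) (φ g * φ h) < ε) ∧
      (∀ g ∈ F, g ≠ 1 → hDist 1 (φ g) > 1 - ε)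

/-!
Choose finite sets exhausting `G` and apply soficity of the action to finite pieces of the orbit
of the coset `H`. This yields maps `φ k : G → Sym(n k)` that are asymptotically multiplicative and,
for `g ∉ H`, move almost every point. Along a free ultrafilter, the elements whose images tend to
the identity in Hamming distance form a normal subgroup `N ≤ H`, and every `g ∉ N` keeps
`hDist 1 (φ k g) ≥ c` for some `c > 0`. The diagonal action on `p`-tuples turns the proportion
`1 - c` of fixed points into `(1 - c) ^ p`, so `G ⧸ N` is sofic.
-/

open Filter Topology Finset

section HammingDistance

variable {A B : Type*} [Fintype A] [Fintype B]

lemma hDist_nonneg (σ τ : Equiv.Perm A) : 0 ≤ hDist σ τ := by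
  unfold hDist; positivity

lemma hDist_le_one (σ τ : Equiv.Perm A) : hDist σ τ ≤ 1 :=
  div_le_one_of_le₀ (by exact_mod_cast card_filter_le _ _) (Nat.cast_nonneg _)

lemma card_mul_hDist (σ τ : Equiv.Perm A) :
    (Fintype.card A : ℝ) * hDist σ τ = #{a | σ a ≠ τ a} := by
  rcases isEmpty_or_nonempty A with _ | _
  · simp
  · exact mul_div_cancel₀ _ (by positivity)

lemma hDist_self (σ : Equiv.Perm A) : hDist σ σ = 0 := by
  simp [hDist]

lemma hDist_comm (σ τ : Equiv.Perm A) : hDist σ τ = hDist τ σ := by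
  simp only [hDist, ne_comm]

lemma hDist_triangle (σ τ ρ : Equiv.Perm A) : hDist σ ρ ≤ hDist σ τ + hDist τ ρ := by
  rw [hDist, hDist, hDist, ← add_div]
  gcongr
  calc (#{a | σ a ≠ ρ a} : ℝ)
        ≤ #(({a | σ a ≠ τ a} : Finset A) ∪ ({a | τ a ≠ ρ a} : Finset A)) := by
        gcongr
        intro a
        simp only [mem_filter, mem_univ, true_and, mem_union]
        contrapose!
        exact fun h => h.1.trans h.2
    _ ≤ _ := by exact_mod_cast card_union_le _ _

lemma hDist_mul_left (ρ σ τ : Equiv.Perm A) : hDist (ρ * σ) (ρ * τ) = hDist σ τ := by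
  simp only [hDist, Equiv.Perm.mul_apply, ρ.injective.ne_iff]

lemma hDist_permCongr (e : A ≃ B) (σ τ : Equiv.Perm A) :
    hDist (e.permCongr σ) (e.permCongr τ) = hDist σ τ := by
  rw [hDist, hDist, Fintype.card_congr e.symm]
  congr 2
  refine card_equiv e.symm fun b => ?_
  simp

lemma hDist_mul_right (σ τ ρ : Equiv.Perm A) : hDist (σ * ρ) (τ * ρ) = hDist σ τ := by
  rw [← hDist_mul_left ρ⁻¹]
  exact hDist_permCongr ρ.symm σ τ

lemma hDist_eq_hDist_one_inv_mul (σ τ : Equiv.Perm A) : hDist σ τ = hDist 1 (σ⁻¹ * τ) := by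
  rw [← hDist_mul_left σ 1, mul_one, mul_inv_cancel_left]

lemma one_sub_hDist_one [Nonempty A] (σ : Equiv.Perm A) :
    1 - hDist 1 σ = #{a | σ a = a} / Fintype.card A := by
  have hcard := card_filter_add_card_filter_not (s := univ) fun a => σ a = a
  rw [card_univ] at hcard
  have hmoved : #{a | (1 : Equiv.Perm A) a ≠ σ a} = #{a | ¬σ a = a} :=
    congrArg card (filter_congr fun a _ => by simp [eq_comm])
  rw [eq_div_iff (by positivity), sub_mul, one_mul, mul_comm, card_mul_hDist, hmoved, ← hcard]
  push_cast
  ring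

end HammingDistance

section Amplification

variable {A : Type*}

def diagPerm (p : ℕ) : Equiv.Perm A →* Equiv.Perm (Fin p → A) where
  toFun σ := Equiv.arrowCongr (Equiv.refl _) σ
  map_one' := rfl
  map_mul' _ _ := rfl

@[simp]
lemma diagPerm_apply (p : ℕ) (σ : Equiv.Perm A) (v : Fin p → A) (i : Fin p) :
    diagPerm p σ v i = σ (v i) :=
  rfl

variable [Fintype A]

lemma card_fixed_diagPerm (p : ℕ) (σ : Equiv.Perm A) :
    #{v | diagPerm p σ v = v} = #{a | σ a = a} ^ p := by
  have : ({v | diagPerm p σ v = v} : Finset (Fin p → A))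
      = Fintype.piFinset fun _ => ({a | σ a = a} : Finset A) := by
    ext v
    simp [funext_iff]
  rw [this, Fintype.card_piFinset, prod_const, card_univ, Fintype.card_fin]

lemma hDist_of_subsingleton [Subsingleton A] (σ τ : Equiv.Perm A) : hDist σ τ = 0 := by
  rw [Subsingleton.elim σ τ, hDist_self]

lemma hDist_one_diagPerm (p : ℕ) (σ : Equiv.Perm A) :
    hDist 1 (diagPerm p σ) = 1 - (1 - hDist 1 σ) ^ p := by
  rcases isEmpty_or_nonempty A with _ | _
  · simp [hDist_of_subsingleton]
  · have hfixed : 1 - hDist 1 (diagPerm p σ) = (1 - hDist 1 σ) ^ p := by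
      rw [one_sub_hDist_one, one_sub_hDist_one, Fintype.card_fun, Fintype.card_fin, div_pow]
      norm_cast
      rw [← card_fixed_diagPerm]
      congr
    linarith

lemma hDist_diagPerm_le (p : ℕ) (σ τ : Equiv.Perm A) :
    hDist (diagPerm p σ) (diagPerm p τ) ≤ p * hDist σ τ := by
  rw [hDist_eq_hDist_one_inv_mul, ← map_inv, ← map_mul, hDist_one_diagPerm,
    hDist_eq_hDist_one_inv_mul σ]
  have hle := hDist_le_one 1 (σ⁻¹ * τ)
  have hbernoulli := one_add_mul_le_pow (a := -hDist 1 (σ⁻¹ * τ)) (by linarith) p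
  rw [← sub_eq_add_neg] at hbernoulli
  linarith

end Amplification

theorem soficGroup_of_forall_exists_pos {Q : Type*} [Group Q]
    (h : ∀ F : Finset Q, ∃ c > 0, ∀ δ > 0, ∃ (n : ℕ) (ψ : Q → Equiv.Perm (Fin n)), ψ 1 = 1 ∧
      (∀ g ∈ F, ∀ g' ∈ F, hDist (ψ (g * g')) (ψ g * ψ g') < δ) ∧
      ∀ g ∈ F, g ≠ 1 → c ≤ hDist 1 (ψ g)) :
    SoficGroup Q := by
  intro F ε hε
  obtain ⟨c, hc, hψ⟩ := h F
  obtain ⟨p, hp⟩ := exists_pow_lt_of_lt_one hε (sub_lt_self 1 hc)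
  obtain ⟨n, ψ, hψ1, hψmul, hψsep⟩ := hψ (ε / (p + 1)) (by positivity)
  let e := (Fintype.equivFin (Fin p → Fin n)).permCongrHom
  refine ⟨_, fun g => e (diagPerm p (ψ g)), by simp [hψ1], fun g hg g' hg' => ?_,
    fun g hg hg1 => ?_⟩
  · rw [← map_mul, ← map_mul, Equiv.permCongrHom_coe, hDist_permCongr]
    calc _ ≤ p * hDist (ψ (g * g')) (ψ g * ψ g') := hDist_diagPerm_le p _ _
      _ ≤ p * (ε / (p + 1)) := by gcongr; exact (hψmul g hg g' hg').le
      _ < ε := by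
        rw [mul_div_assoc', div_lt_iff₀ (by positivity)]
        linarith
  · rw [← map_one e, Equiv.permCongrHom_coe, hDist_permCongr, hDist_one_diagPerm]
    have hpow : (1 - hDist 1 (ψ g)) ^ p ≤ (1 - c) ^ p :=
      pow_le_pow_left₀ (sub_nonneg.2 (hDist_le_one _ _)) (by linarith [hψsep g hg hg1]) p
    linarith

lemma IsOrbitApprox.one_sub_lt_hDist_one {G X : Type*} [Group G] {n : ℕ}
    {α : G →* Equiv.Perm X} {F : Finset G} {E : Finset X} {ε : ℝ} {φ : G → Equiv.Perm (Fin n)}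
    (h : IsOrbitApprox α F E ε φ) {g : G} {x : X} (hg : g ∈ F) (hx : x ∈ E)
    (hgx : α g⁻¹ x ∈ E) (hne : α g⁻¹ x ≠ x) :
    1 - ε < hDist 1 (φ g) := by
  obtain ⟨m, S, π, hS, hinj, hequiv⟩ := h
  -- a point of `S` fixed by `φ g` would make `π s` identify `x` with `α g⁻¹ x`
  have hmoved : S ⊆ ({s | (1 : Equiv.Perm (Fin n)) s ≠ φ g s} : Finset (Fin n)) := by
    intro s hs
    rw [mem_filter_univ, Equiv.Perm.one_apply]
    intro hfix
    have hπ := hequiv s hs g hg x hx (hfix ▸ hs) hgx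
    rw [← hfix] at hπ
    exact hne (hinj s hs hgx hx hπ.symm)
  have hcard := card_mul_hDist 1 (φ g)
  rw [Fintype.card_fin] at hcard
  have : (n : ℝ) * (1 - ε) < n * hDist 1 (φ g) := by
    rw [hcard, mul_comm]
    exact hS.trans_le (by exact_mod_cast card_le_card hmoved)
  exact lt_of_mul_lt_mul_left this (Nat.cast_nonneg n)

section AsymptoticHom

variable {ι : Type*} {l l' : Filter ι} {n : ι → ℕ}

def AsympEq (l : Filter ι) (a b : ∀ i, Equiv.Perm (Fin (n i))) : Prop :=
  Tendsto (fun i => hDist (a i) (b i)) l (𝓝 0)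

namespace AsympEq

variable {a a' b b' c : ∀ i, Equiv.Perm (Fin (n i))}

lemma refl (a : ∀ i, Equiv.Perm (Fin (n i))) : AsympEq l a a := by
  simpa [AsympEq, hDist_self] using tendsto_const_nhds

lemma symm (h : AsympEq l a b) : AsympEq l b a := by
  simpa only [AsympEq, hDist_comm] using h

lemma trans (hab : AsympEq l a b) (hbc : AsympEq l b c) : AsympEq l a c :=
  squeeze_zero (fun _ => hDist_nonneg _ _) (fun i => hDist_triangle _ (b i) _)
    (by simpa using hab.add hbc)

lemma mul_left (c : ∀ i, Equiv.Perm (Fin (n i))) (h : AsympEq l a b) :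
    AsympEq l (c * a) (c * b) := by
  simpa only [AsympEq, Pi.mul_apply, hDist_mul_left] using h

lemma mul_right (c : ∀ i, Equiv.Perm (Fin (n i))) (h : AsympEq l a b) :
    AsympEq l (a * c) (b * c) := by
  simpa only [AsympEq, Pi.mul_apply, hDist_mul_right] using h

lemma mul (ha : AsympEq l a a') (hb : AsympEq l b b') : AsympEq l (a * b) (a' * b') :=
  (hb.mul_left a).trans (ha.mul_right b')

lemma mono (h : AsympEq l a b) (hl : l' ≤ l) : AsympEq l' a b :=
  Tendsto.mono_left h hl

end AsympEq

structure IsAsymptoticHom {G : Type*} [Group G] (l : Filter ι)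
    (φ : G → ∀ i, Equiv.Perm (Fin (n i))) : Prop where
  map_one : φ 1 = 1
  map_mul (g h : G) : AsympEq l (φ (g * h)) (φ g * φ h)

namespace IsAsymptoticHom

variable {G : Type*} [Group G] {φ : G → ∀ i, Equiv.Perm (Fin (n i))}

lemma mono (hφ : IsAsymptoticHom l φ) (hl : l' ≤ l) : IsAsymptoticHom l' φ :=
  ⟨hφ.map_one, fun g h => (hφ.map_mul g h).mono hl⟩

variable (hφ : IsAsymptoticHom l φ)
include hφ

lemma asympEq_inv (g : G) : AsympEq l (φ g * φ g⁻¹) 1 := by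
  simpa [hφ.map_one] using (hφ.map_mul g g⁻¹).symm

def ker : Subgroup G where
  carrier := {g | AsympEq l 1 (φ g)}
  one_mem' := by
    show AsympEq l 1 (φ 1)
    exact hφ.map_one ▸ .refl _
  mul_mem' {g h} hg hh := by
    simpa using (hg.mul hh).trans (hφ.map_mul g h).symm
  inv_mem' {g} hg := by
    simpa using ((hg.mul_right (φ g⁻¹)).trans (hφ.asympEq_inv g)).symm

lemma mem_ker {g : G} : g ∈ hφ.ker ↔ AsympEq l 1 (φ g) :=
  Iff.rfl

instance : hφ.ker.Normal := by
  refine ⟨fun m hm g => ?_⟩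
  have hconj : AsympEq l (φ (g * m * g⁻¹)) (φ g * φ m * φ g⁻¹) :=
    (hφ.map_mul _ _).trans ((hφ.map_mul g m).mul_right _)
  have hm' : AsympEq l (φ g * φ m * φ g⁻¹) (φ g * φ g⁻¹) := by
    simpa using ((hφ.mem_ker.1 hm).symm.mul_left (φ g)).mul_right (φ g⁻¹)
  exact (hconj.trans (hm'.trans (hφ.asympEq_inv g))).symm

lemma asympEq_of_inv_mul_mem_ker {a b : G} (h : a⁻¹ * b ∈ hφ.ker) : AsympEq l (φ a) (φ b) := by
  have hb := hφ.map_mul a (a⁻¹ * b)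
  rw [mul_inv_cancel_left] at hb
  simpa using (hb.trans ((hφ.mem_ker.1 h).symm.mul_left (φ a))).symm

end IsAsymptoticHom

end AsymptoticHom

namespace IsAsymptoticHom

variable {ι : Type*} {n : ι → ℕ} {G : Type*} [Group G] {φ : G → ∀ i, Equiv.Perm (Fin (n i))}
  {U : Ultrafilter ι} (hφ : IsAsymptoticHom (U : Filter ι) φ)
include hφ

lemma eventually_le_hDist_one {g : G} (hg : g ∉ hφ.ker) :
    ∀ᶠ c in 𝓝[>] (0 : ℝ), ∀ᶠ i in (U : Filter ι), c ≤ hDist 1 (φ g i) := by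
  obtain ⟨c₀, hc₀, hle⟩ : ∃ c₀ > 0, ∀ᶠ i in (U : Filter ι), c₀ ≤ hDist 1 (φ g i) := by
    -- in an ultrafilter, `¬ ∀ᶠ i, c ≤ f i` means `∀ᶠ i, f i < c`
    by_contra! hnot
    refine hg (tendsto_order.2 ⟨fun a ha => .of_forall fun i => ?_, fun c hc => ?_⟩)
    · exact ha.trans_le (hDist_nonneg _ _)
    · exact hnot c hc
  filter_upwards [Ioc_mem_nhdsGT hc₀] with c hc
  filter_upwards [hle] with i hi using hc.2.trans hi

theorem soficGroup_quotient_ker : SoficGroup (G ⧸ hφ.ker) := by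
  obtain ⟨s, hs1, hs⟩ : ∃ s : G ⧸ hφ.ker → G, s 1 = 1 ∧ ∀ q, (s q : G ⧸ hφ.ker) = q :=
    ⟨fun q => if q = 1 then 1 else q.out, by simp,
      fun q => by dsimp only; split_ifs with h <;> simp [h]⟩
  refine soficGroup_of_forall_exists_pos fun F => ?_
  have hc : ∀ᶠ c in 𝓝[>] (0 : ℝ), 0 < c ∧
      ∀ q ∈ F, q ≠ 1 → ∀ᶠ i in (U : Filter ι), c ≤ hDist 1 (φ (s q) i) := by
    refine eventually_mem_nhdsWithin.and ((eventually_all_finset F).2 fun q _ => ?_)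
    by_cases hq : q = 1
    · simp [hq]
    · refine (hφ.eventually_le_hDist_one fun hmem => hq ?_).mono fun c hc _ => hc
      rw [← hs q]
      exact (QuotientGroup.eq_one_iff _).2 hmem
  obtain ⟨c, hc0, hcF⟩ := hc.exists
  refine ⟨c, hc0, fun δ hδ => ?_⟩
  have hmul (q q' : G ⧸ hφ.ker) : AsympEq U (φ (s (q * q'))) (φ (s q) * φ (s q')) := by
    refine (hφ.asympEq_of_inv_mul_mem_ker ?_).symm.trans (hφ.map_mul _ _)
    rw [← QuotientGroup.eq, QuotientGroup.mk_mul, hs, hs, hs]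
  have hk : ∀ᶠ i in (U : Filter ι),
      (∀ q ∈ F, ∀ q' ∈ F, hDist (φ (s (q * q')) i) (φ (s q) i * φ (s q') i) < δ) ∧
      ∀ q ∈ F, q ≠ 1 → c ≤ hDist 1 (φ (s q) i) := by
    refine ((eventually_all_finset F).2 fun q _ => (eventually_all_finset F).2 fun q' _ =>
      (hmul q q').eventually_lt_const hδ).and ((eventually_all_finset F).2 fun q hq => ?_)
    exact eventually_imp_distrib_left.2 (hcF q hq)
  obtain ⟨i, hi⟩ := hk.exists
  exact ⟨n i, fun q => φ (s q) i, by simp [hs1, hφ.map_one], hi⟩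

end IsAsymptoticHom

theorem SoficAction.exists_isAsymptoticHom {G X : Type*} [Group G] [Countable G]
    {α : G →* Equiv.Perm X} (h : SoficAction α) (x₀ : X) :
    ∃ (n : ℕ → ℕ) (φ : G → ∀ k, Equiv.Perm (Fin (n k))), IsAsymptoticHom atTop φ ∧
      ∀ g, α g x₀ ≠ x₀ → Tendsto (fun k => hDist 1 (φ g k)) atTop (𝓝 1) := by
  obtain ⟨e, he⟩ := exists_surjective_nat G
  let F : ℕ → Finset G := fun k => (range k).image e
  have hF (g : G) : ∀ᶠ k in atTop, g ∈ F k := by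
    obtain ⟨j, rfl⟩ := he g
    filter_upwards [eventually_gt_atTop j] with k hk using mem_image_of_mem e (mem_range.2 hk)
  choose n φ hφ1 hφmul hφorb using fun k : ℕ =>
    h (F k) (insert x₀ ((F k).image fun g => α g⁻¹ x₀)) (1 / (k + 1)) (by positivity)
  have hε := tendsto_one_div_add_atTop_nhds_zero_nat (𝕜 := ℝ)
  refine ⟨n, fun g k => φ k g, ⟨funext hφ1, fun g g' => ?_⟩, fun g hg => ?_⟩
  · refine squeeze_zero' (.of_forall fun k => hDist_nonneg _ _) ?_ hε
    filter_upwards [hF g, hF g'] with k hgk hg'k using (hφmul k g hgk g' hg'k).le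
  · have hg' : α g⁻¹ x₀ ≠ x₀ := fun hfix => hg (by
      rw [← hfix, ← Equiv.Perm.mul_apply, ← map_mul, mul_inv_cancel, map_one,
        Equiv.Perm.one_apply, hfix])
    refine tendsto_of_tendsto_of_tendsto_of_le_of_le'
      (by simpa only [sub_zero] using tendsto_const_nhds.sub hε) tendsto_const_nhds ?_
      (.of_forall fun k => hDist_le_one _ _)
    filter_upwards [hF g] with k hk
    exact ((hφorb k).one_sub_lt_hDist_one hk (mem_insert_self _ _)
      (mem_insert_of_mem (mem_image_of_mem _ hk)) hg').le

theorem stmt_14 {G : Type*} [Group G] [Countable G] (H : Subgroup G)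
    (h : SoficAction (MulAction.toPermHom G (G ⧸ H))) :
    ∃ (N : Subgroup G) (hN : N.Normal), N ≤ H ∧
      @SoficGroup (G ⧸ N) (@QuotientGroup.Quotient.group G _ N hN) := by
  obtain ⟨n, φ, hφ, hsep⟩ := h.exists_isAsymptoticHom (QuotientGroup.mk 1 : G ⧸ H)
  have hU : ((hyperfilter ℕ : Ultrafilter ℕ) : Filter ℕ) ≤ atTop :=
    Nat.cofinite_eq_atTop ▸ hyperfilter_le_cofinite
  have hφU := hφ.mono hU
  refine ⟨hφU.ker, inferInstance, fun g hg => ?_, hφU.soficGroup_quotient_ker⟩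
  by_contra hgH
  have hmoved : MulAction.toPermHom G (G ⧸ H) g (QuotientGroup.mk 1) ≠ QuotientGroup.mk 1 := by
    simpa [QuotientGroup.eq] using hgH
  exact zero_ne_one (tendsto_nhds_unique (hφU.mem_ker.1 hg) ((hsep g hmoved).mono_left hU))
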